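/- Let μ ∈ ℂ with Re μ > 0, |λ| < 1, θ ∈ ℝ, and z ∈ D. Then H_{e^{iθ},λ}'(z)/H_{e^{iθ},λ}(z) − (μ/π)·c(z,λ) = (|μ|/π)·r(z,λ)·G'(z)/|G'(z)| for z ≠ 0, where G(z) = (μ/π)·∫₀^z e^{iθ}ζ / (1 + (conj(λ)e^{iθ} − λ)ζ − e^{iθ}ζ²)² dζ, c(z,λ) = (|z|²(conj(z) − λ)(1 − conj(λ)) − (1 − λ)(1 − conj(λ)·conj(z))) / ((1 − z)(1 − |z|²)(1 + |z|² − 2·Re(λz))), and r(z,λ) = (1 − |λ|²)|z| / ((1 − |z|²)(1 + |z|² − 2·Re(λz))). -/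

import Mathlib

open Complex Set Metric

noncomputable section

/-- The open unit disk in `ℂ`. -/
def unitDisk : Set ℂ := Metric.ball (0 : ℂ) 1

/-- `P_f(z) = (2π/μ)·(z f'(z)/f(z)) + (1+z)/(1−z)`. -/
def Pfun (μ : ℂ) (f : ℂ → ℂ) (z : ℂ) : ℂ :=
  2 * (Real.pi : ℂ) / μ * (z * deriv f z / f z) + (1 + z) / (1 - z)

/-- Membership in the class `F_μ`: analytic, non-vanishing on the disk, `f(0) = 1`,
and `Re P_f > 0` on the disk. -/
def memF (μ : ℂ) (f : ℂ → ℂ) : Prop :=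
  AnalyticOnNhd ℂ f unitDisk ∧ (∀ z ∈ unitDisk, f z ≠ 0) ∧ f 0 = 1 ∧
    ∀ z ∈ unitDisk, 0 < (Pfun μ f z).re

/-- Membership in the class `F_μ(λ)`: `f ∈ F_μ` with `f'(0) = (μ/π)(λ − 1)`. -/
def memFlam (μ lam : ℂ) (f : ℂ → ℂ) : Prop :=
  memF μ f ∧ deriv f 0 = μ / (Real.pi : ℂ) * (lam - 1)

/-- The branch of `log f` vanishing at `0`: `log f(z) = ∫₀^z f'(ζ)/f(ζ) dζ`
(integral over the segment from `0` to `z`). -/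
def logf (f : ℂ → ℂ) (z : ℂ) : ℂ :=
  ∫ t in (0:ℝ)..1, deriv f (t * z) / f (t * z) * z

/-- The region of variability `V(z₀, λ) = {log f(z₀) : f ∈ F_μ(λ)}`. -/
def Vset (μ lam z₀ : ℂ) : Set ℂ := {w | ∃ f, memFlam μ lam f ∧ w = logf f z₀}

/-- `δ(w, λ) = (w + λ)/(1 + conj(λ) w)`. -/
def dl (lam w : ℂ) : ℂ := (w + lam) / (1 + (starRingEnd ℂ) lam * w)

/-- `log H_{a,λ}(z) = (μ/π)·∫₀^z (δ(aζ,λ) − 1)/((1 − δ(aζ,λ)ζ)(1 − ζ)) dζ`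
(integral over the segment from `0` to `z`). -/
def Hlog (μ lam a z : ℂ) : ℂ :=
  μ / (Real.pi : ℂ) *
    ∫ t in (0:ℝ)..1,
      (dl lam (a * (t * z)) - 1) /
        ((1 - dl lam (a * (t * z)) * (t * z)) * (1 - t * z)) * z

/-- The function `H_{a,λ}(z) = exp(log H_{a,λ}(z))`. -/
def Hfun (μ lam a z : ℂ) : ℂ := Complex.exp (Hlog μ lam a z)

/-- `c(z, λ)`. -/
def cfun (z lam : ℂ) : ℂ :=
  ((‖z‖ : ℂ) ^ 2 * ((starRingEnd ℂ) z - lam) * (1 - (starRingEnd ℂ) lam)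
      - (1 - lam) * (1 - (starRingEnd ℂ) lam * (starRingEnd ℂ) z)) /
    ((1 - z) * (1 - (‖z‖ : ℂ) ^ 2)
      * (1 + (‖z‖ : ℂ) ^ 2 - 2 * ((lam * z).re : ℂ)))

/-- `r(z, λ)`. -/
def rfun (z lam : ℂ) : ℝ :=
  (1 - ‖lam‖ ^ 2) * ‖z‖ /
    ((1 - ‖z‖ ^ 2) * (1 + ‖z‖ ^ 2 - 2 * (lam * z).re))

/-- A starlike univalent function on the unit disk: analytic, `φ(0) = 0`, `φ'(0) = 1`,
univalent, and `Re(z φ'(z)/φ(z)) > 0` on the disk. -/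
def IsStarlike (φ : ℂ → ℂ) : Prop :=
  AnalyticOnNhd ℂ φ unitDisk ∧ φ 0 = 0 ∧ deriv φ 0 = 1 ∧
    Set.InjOn φ unitDisk ∧
    ∀ z ∈ unitDisk, z ≠ 0 → 0 < (z * deriv φ z / φ z).re

/-- `G(z) = (μ/π)·∫₀^z e^{iθ}ζ/(1 + (conj(λ)e^{iθ} − λ)ζ − e^{iθ}ζ²)² dζ`
(integral over the segment from `0` to `z`). -/
def Gfun (μ lam : ℂ) (θ : ℝ) (z : ℂ) : ℂ :=
  μ / (Real.pi : ℂ) *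
    ∫ t in (0:ℝ)..1,
      Complex.exp (θ * Complex.I) * (t * z) /
        (1 + ((starRingEnd ℂ) lam * Complex.exp (θ * Complex.I) - lam) * (t * z)
          - Complex.exp (θ * Complex.I) * (t * z) ^ 2) ^ 2 * z

end

/-! Both logarithmic derivatives are read off by the fundamental theorem of calculus: on a disk a
holomorphic `f` has a primitive `F`, so `w ↦ ∫₀¹ f(tw) w dt = F w - F 0` has derivative `f`.
Clearing the Möbius denominator gives `H'/H = (μ/π)((1 - λ̄)az + λ - 1)/(Q(z)(1 - z))` and
`G' = (μ/π) a z / Q(z)²` with `Q(ζ) = 1 + (λ̄a - λ)ζ - aζ²`, which does not vanish on the disk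
because `|aζ + λ| < |1 + λ̄aζ|`. For `|a| = 1` we have `ā = a⁻¹`, so after writing `|z|² = z z̄`
both `H'/H - (μ/π)c` and `(|μ|/π) r G'/|G'|` become `(μ/π)(1 - |λ|²) a z Q̄ / ((1 - |z|²) D Q)`
with `D = 1 + |z|² - 2 Re(λz)`, an identity of rational functions in `z, z̄, λ, λ̄, a`. -/

open ComplexConjugate Topology

lemma integral_segment_eq_sub {f F : ℂ → ℂ} {r : ℝ} {z : ℂ}
    (hF : ∀ w ∈ ball (0 : ℂ) r, HasDerivAt F (f w) w) (hf : ContinuousOn f (ball 0 r))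
    (hz : z ∈ ball (0 : ℂ) r) :
    ∫ t in (0:ℝ)..1, f (t * z) * z = F z - F 0 := by
  have hseg : ∀ t ∈ uIcc (0:ℝ) 1, (t : ℂ) * z ∈ ball (0 : ℂ) r := by
    intro t ht
    rw [uIcc_of_le zero_le_one] at ht
    rw [mem_ball_zero_iff, norm_mul, Complex.norm_real, Real.norm_of_nonneg ht.1]
    exact (mul_le_of_le_one_left (norm_nonneg z) ht.2).trans_lt (mem_ball_zero_iff.mp hz)
  have hderiv : ∀ t ∈ uIcc (0:ℝ) 1, HasDerivAt (fun s : ℝ => F (s * z)) (f (t * z) * z) t := by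
    intro t ht
    simpa using ((hF _ (hseg t ht)).comp (t : ℂ) ((hasDerivAt_id (t : ℂ)).mul_const z)).comp_ofReal
  have hcont : ContinuousOn (fun t : ℝ => f (t * z) * z) (uIcc 0 1) :=
    (hf.comp (by fun_prop) hseg).mul continuousOn_const
  simpa using intervalIntegral.integral_eq_sub_of_hasDerivAt hderiv hcont.intervalIntegrable

lemma hasDerivAt_integral_segment {f : ℂ → ℂ} {r : ℝ} {z : ℂ}
    (hf : DifferentiableOn ℂ f (ball 0 r)) (hz : z ∈ ball (0 : ℂ) r) :
    HasDerivAt (fun w => ∫ t in (0:ℝ)..1, f (t * w) * w) (f z) z := by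
  obtain ⟨F, hF⟩ := hf.isExactOn_ball
  have hprim : (fun w => ∫ t in (0:ℝ)..1, f (t * w) * w) =ᶠ[𝓝 z] fun w => F w - F 0 :=
    Filter.eventually_of_mem (isOpen_ball.mem_nhds hz) fun w hw =>
      integral_segment_eq_sub hF hf.continuousOn hw
  exact ((hF z hz).sub_const (F 0)).congr_of_eventuallyEq hprim

lemma norm_add_lt_norm_one_add_conj_mul {w l : ℂ} (hw : ‖w‖ < 1) (hl : ‖l‖ < 1) :
    ‖w + l‖ < ‖1 + conj l * w‖ := by
  have key : normSq (1 + conj l * w) - normSq (w + l) = (1 - normSq w) * (1 - normSq l) := by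
    simp only [normSq_apply, add_re, add_im, mul_re, mul_im, one_re, one_im, conj_re, conj_im]
    ring
  rw [← sq_lt_sq₀ (norm_nonneg _) (norm_nonneg _), Complex.sq_norm, Complex.sq_norm]
  rw [← sq_lt_one_iff₀ (norm_nonneg _), Complex.sq_norm] at hw hl
  nlinarith

lemma one_sub_ne_zero_of_norm_lt_one {R : Type*} [NormedRing R] [NormOneClass R] {x : R}
    (hx : ‖x‖ < 1) : 1 - x ≠ 0 :=
  sub_ne_zero.mpr (ne_of_apply_ne norm (norm_one.trans_ne hx.ne'))

/-- `(1 - δ(aζ, λ) ζ)(1 + λ̄aζ) = Q(ζ)`, and `Q²` is the denominator of `G'`. -/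
def qpoly (lam a ζ : ℂ) : ℂ := 1 + (conj lam * a - lam) * ζ - a * ζ ^ 2

section ClosedDisk

variable {lam a ζ : ℂ}

lemma norm_mul_lt_one_of_le_one (ha : ‖a‖ ≤ 1) (hζ : ‖ζ‖ < 1) : ‖a * ζ‖ < 1 := by
  rw [norm_mul]
  exact (mul_le_of_le_one_left (norm_nonneg ζ) ha).trans_lt hζ

lemma qpoly_ne_zero (hlam : ‖lam‖ < 1) (ha : ‖a‖ ≤ 1) (hζ : ‖ζ‖ < 1) : qpoly lam a ζ ≠ 0 := by
  have haζ := norm_mul_lt_one_of_le_one ha hζ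
  have hlt : ‖ζ * (a * ζ + lam)‖ < ‖1 + conj lam * (a * ζ)‖ := by
    rw [norm_mul]
    exact (mul_le_of_le_one_left (norm_nonneg _) hζ.le).trans_lt
      (norm_add_lt_norm_one_add_conj_mul haζ hlam)
  intro h
  have : 1 + conj lam * (a * ζ) = ζ * (a * ζ + lam) := by
    unfold qpoly at h; linear_combination h
  exact hlt.ne (by rw [this])

lemma dl_integrand_eq (hlam : ‖lam‖ < 1) (ha : ‖a‖ ≤ 1) (hζ : ‖ζ‖ < 1) :
    (dl lam (a * ζ) - 1) / ((1 - dl lam (a * ζ) * ζ) * (1 - ζ)) =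
      ((1 - conj lam) * (a * ζ) + (lam - 1)) / (qpoly lam a ζ * (1 - ζ)) := by
  have hN : 1 + conj lam * (a * ζ) ≠ 0 := norm_pos_iff.mp <| (norm_nonneg _).trans_lt <|
    norm_add_lt_norm_one_add_conj_mul (norm_mul_lt_one_of_le_one ha hζ) hlam
  have hnum : dl lam (a * ζ) - 1 =
      ((1 - conj lam) * (a * ζ) + (lam - 1)) / (1 + conj lam * (a * ζ)) := by
    unfold dl; rw [div_sub_one hN]; ring
  have hden : 1 - dl lam (a * ζ) * ζ = qpoly lam a ζ / (1 + conj lam * (a * ζ)) := by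
    unfold dl qpoly
    rw [eq_div_iff hN, sub_mul, mul_right_comm, div_mul_cancel₀ _ hN]; ring
  rw [hnum, hden, div_mul_eq_mul_div, div_div_div_cancel_right₀ hN]


variable (μ : ℂ) {z : ℂ}

lemma hasDerivAt_Hlog (hlam : ‖lam‖ < 1) (ha : ‖a‖ ≤ 1) (hz : z ∈ unitDisk) :
    HasDerivAt (Hlog μ lam a) (μ / (Real.pi : ℂ) *
      (((1 - conj lam) * (a * z) + (lam - 1)) / (qpoly lam a z * (1 - z)))) z := by
  have hdiff : DifferentiableOn ℂ
      (fun ζ => (dl lam (a * ζ) - 1) / ((1 - dl lam (a * ζ) * ζ) * (1 - ζ))) unitDisk := by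
    refine DifferentiableOn.congr (f := fun ζ =>
      ((1 - conj lam) * (a * ζ) + (lam - 1)) / (qpoly lam a ζ * (1 - ζ))) ?_ ?_
    · refine DifferentiableOn.div (by fun_prop) (by unfold qpoly; fun_prop) fun ζ hζ => ?_
      have hζ' : ‖ζ‖ < 1 := mem_ball_zero_iff.mp hζ
      exact mul_ne_zero (qpoly_ne_zero hlam ha hζ') (one_sub_ne_zero_of_norm_lt_one hζ')
    · exact fun ζ hζ => dl_integrand_eq hlam ha (mem_ball_zero_iff.mp hζ)
  rw [← dl_integrand_eq hlam ha (mem_ball_zero_iff.mp hz)]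
  exact (hasDerivAt_integral_segment hdiff hz).const_mul _

lemma deriv_Hfun_div_Hfun (hlam : ‖lam‖ < 1) (ha : ‖a‖ ≤ 1) (hz : z ∈ unitDisk) :
    deriv (Hfun μ lam a) z / Hfun μ lam a z = μ / (Real.pi : ℂ) *
      (((1 - conj lam) * (a * z) + (lam - 1)) / (qpoly lam a z * (1 - z))) := by
  unfold Hfun
  rw [(hasDerivAt_Hlog μ hlam ha hz).cexp.deriv, mul_div_cancel_left₀ _ (exp_ne_zero _)]

lemma hasDerivAt_Gfun (θ : ℝ) (hlam : ‖lam‖ < 1) (hz : z ∈ unitDisk) :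
    HasDerivAt (Gfun μ lam θ)
      (μ / (Real.pi : ℂ) * (exp (θ * I) * z / qpoly lam (exp (θ * I)) z ^ 2)) z := by
  have ha : ‖exp (θ * I)‖ ≤ 1 := (norm_exp_ofReal_mul_I θ).le
  have hdiff : DifferentiableOn ℂ (fun ζ => exp (θ * I) * ζ / qpoly lam (exp (θ * I)) ζ ^ 2)
      unitDisk :=
    DifferentiableOn.div (by fun_prop) (by unfold qpoly; fun_prop) fun ζ hζ =>
      pow_ne_zero 2 (qpoly_ne_zero hlam ha (mem_ball_zero_iff.mp hζ))
  exact (hasDerivAt_integral_segment hdiff hz).const_mul _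

end ClosedDisk

/-- Here `w, m, qc` stand for `z̄, λ̄, Q̄`, and `a * qc = …` encodes `ā = a⁻¹`. -/
lemma div_sub_div_eq_of_conj {K : Type*} [Field K] {z w l m a q qc n s d : K} (ha : a ≠ 0)
    (hq : q = 1 + (m * a - l) * z - a * z ^ 2) (hqc : a * qc = a + (l - m * a) * w - w ^ 2)
    (hn : n = z * w) (hs : s = l * m) (hd : d = 1 + n - (l * z + m * w))
    (hz : 1 - z ≠ 0) (hq0 : q ≠ 0) (hn1 : 1 - n ≠ 0) (hd0 : d ≠ 0) :
    ((1 - m) * (a * z) + (l - 1)) / (q * (1 - z)) -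
        (n * (w - l) * (1 - m) - (1 - l) * (1 - m * w)) / ((1 - z) * (1 - n) * d) =
      (1 - s) / ((1 - n) * d) * (a * z * qc / q) := by
  have hqc' : qc = (a + (l - m * a) * w - w ^ 2) / a := by
    rw [eq_div_iff ha]; linear_combination hqc
  rw [div_sub_div _ _ (mul_ne_zero hq0 hz) (mul_ne_zero (mul_ne_zero hz hn1) hd0),
    div_mul_div_comm, div_eq_div_iff (mul_ne_zero (mul_ne_zero hq0 hz) (mul_ne_zero
      (mul_ne_zero hz hn1) hd0)) (mul_ne_zero (mul_ne_zero hn1 hd0) hq0), hqc']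
  subst hq hn hs hd
  field_simp
  ring

lemma one_add_norm_sq_sub_two_re_pos {lam z : ℂ} (hlam : ‖lam‖ < 1) (hz : ‖z‖ < 1) :
    0 < 1 + ‖z‖ ^ 2 - 2 * (lam * z).re := by
  have hre : (lam * z).re ≤ ‖z‖ :=
    (re_le_norm _).trans (by rw [norm_mul]; exact mul_le_of_le_one_left (norm_nonneg z) hlam.le)
  nlinarith

lemma sub_cfun_eq {lam a z : ℂ} (hlam : ‖lam‖ < 1) (ha : ‖a‖ = 1) (hz : ‖z‖ < 1) :
    ((1 - conj lam) * (a * z) + (lam - 1)) / (qpoly lam a z * (1 - z)) - cfun z lam =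
      ((1 - ‖lam‖ ^ 2) / ((1 - ‖z‖ ^ 2) * (1 + ‖z‖ ^ 2 - 2 * (lam * z).re)) : ℝ) *
        (a * z * conj (qpoly lam a z) / qpoly lam a z) := by
  have ha0 : a ≠ 0 := norm_ne_zero_iff.mp (by rw [ha]; exact one_ne_zero)
  have hqc : a * conj (qpoly lam a z) = a + (lam - conj lam * a) * conj z - conj z ^ 2 := by
    simp only [qpoly, map_add, map_sub, map_mul, map_pow, map_one, conj_conj, ← inv_eq_conj ha]
    field_simp
  have hn1 : (1 : ℂ) - (‖z‖ : ℂ) ^ 2 ≠ 0 := by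
    exact_mod_cast (sub_pos.mpr (pow_lt_one₀ (norm_nonneg z) hz two_ne_zero)).ne'
  have hd0 : (1 : ℂ) + (‖z‖ : ℂ) ^ 2 - 2 * ((lam * z).re : ℂ) ≠ 0 := by
    exact_mod_cast (one_add_norm_sq_sub_two_re_pos hlam hz).ne'
  unfold cfun
  push_cast
  refine div_sub_div_eq_of_conj ha0 rfl hqc (mul_conj' z).symm (mul_conj' lam).symm ?_
    (one_sub_ne_zero_of_norm_lt_one hz) (qpoly_ne_zero hlam ha.le hz) hn1 hd0
  rw [re_eq_add_conj, ← mul_conj', map_mul]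
  ring

lemma div_mul_div_sq_div_norm {μ w q : ℂ} {c : ℝ} (hc : 0 < c) (hμ : μ ≠ 0) (hw : w ≠ 0)
    (hq : q ≠ 0) :
    μ / c * (w / q ^ 2) / ‖μ / c * (w / q ^ 2)‖ = μ / ‖μ‖ * (w * conj q / (‖w‖ * q)) := by
  have hc' : (c : ℂ) ≠ 0 := ofReal_ne_zero.mpr hc.ne'
  have hμ' : (‖μ‖ : ℂ) ≠ 0 := ofReal_ne_zero.mpr (norm_ne_zero_iff.mpr hμ)
  have hw' : (‖w‖ : ℂ) ≠ 0 := ofReal_ne_zero.mpr (norm_ne_zero_iff.mpr hw)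
  rw [norm_mul, norm_div, norm_div, norm_pow, norm_real, Real.norm_of_nonneg hc.le]
  push_cast
  rw [← mul_conj' q]
  field_simp

theorem stmt19 (μ lam : ℂ) (hμ : 0 < μ.re) (hlam : ‖lam‖ < 1)
    (θ : ℝ) (z : ℂ) (hz : z ∈ unitDisk) (hz0 : z ≠ 0) :
    deriv (Hfun μ lam (Complex.exp (θ * Complex.I))) z /
          Hfun μ lam (Complex.exp (θ * Complex.I)) z
        - μ / (Real.pi : ℂ) * cfun z lam =
      (‖μ‖ / Real.pi : ℝ) * (rfun z lam : ℂ) *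
        (deriv (Gfun μ lam θ) z / (‖deriv (Gfun μ lam θ) z‖ : ℂ)) := by
  have ha : ‖exp (θ * I)‖ = 1 := norm_exp_ofReal_mul_I θ
  have hz' : ‖z‖ < 1 := mem_ball_zero_iff.mp hz
  have hμ0 : μ ≠ 0 := by rintro rfl; exact hμ.false
  have hz0' : (‖z‖ : ℂ) ≠ 0 := ofReal_ne_zero.mpr (norm_ne_zero_iff.mpr hz0)
  have hμ' : (‖μ‖ : ℂ) ≠ 0 := ofReal_ne_zero.mpr (norm_ne_zero_iff.mpr hμ0)
  rw [deriv_Hfun_div_Hfun μ hlam ha.le hz, (hasDerivAt_Gfun μ θ hlam hz).deriv, ← mul_sub,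
    sub_cfun_eq hlam ha hz', div_mul_div_sq_div_norm Real.pi_pos hμ0
      (mul_ne_zero (exp_ne_zero _) hz0) (qpoly_ne_zero hlam ha.le hz'), norm_mul, ha, one_mul,
    rfun]
  push_cast
  field_simp
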